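/- Let X be a finite set with |X| ≥ 2, let C be a weak patchwork for X, and let A ∈ C be a cluster with |Max(C:A)| ≥ 2. Then exactly one of the following two assertions holds: [M1-A] every cluster in C contained in A is compatible with every member of Max(C:A) (in particular, distinct members of Max(C:A) are disjoint); or [M2-A] any two distinct clusters C, C' ∈ Max(C:A) satisfy C ∩ C' ≠ ∅ and C ∪ C' = A. Furthermore, if C is a saturated patchwork, then [M1-A] holds if and only if Max(C:A) ⊆ C*, in which case the cluster system ⟨Max(C:A)⟩ := {⋃M : ∅ ≠ M ⊊ Max(C:A)} is also contained in C*. -/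

import Mathlib

/-- Two subsets `A`, `B` are compatible if `A ∩ B ∈ {∅, A, B}`. -/
def Compatible {α : Type*} [DecidableEq α] (A B : Finset α) : Prop :=
  A ∩ B = ∅ ∨ A ∩ B = A ∨ A ∩ B = B

/-- A cluster system: a collection of non-empty subsets of `X`. -/
def IsCS {α : Type*} [DecidableEq α] (C : Set (Finset α)) : Prop :=
  ∀ A ∈ C, A.Nonempty

/-- The adjoint `C*`: all non-empty subsets of `X` compatible with every member of `C`. -/
def adjS {α : Type*} [DecidableEq α] (C : Set (Finset α)) : Set (Finset α) :=
  {A | A.Nonempty ∧ ∀ B ∈ C, Compatible A B}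

/-- A hierarchy: a cluster system whose members are pairwise compatible. -/
def IsHierarchyS {α : Type*} [DecidableEq α] (C : Set (Finset α)) : Prop :=
  IsCS C ∧ ∀ A ∈ C, ∀ B ∈ C, Compatible A B

/-- A maximal hierarchy: a hierarchy not properly contained in any other hierarchy. -/
def IsMaxHierarchyS {α : Type*} [DecidableEq α] (H : Set (Finset α)) : Prop :=
  IsHierarchyS H ∧ ∀ D : Set (Finset α), IsHierarchyS D → H ⊆ D → D = H

/-- A weak patchwork: incompatible members have their union in the system. -/
def IsWeakPW {α : Type*} [DecidableEq α] (C : Set (Finset α)) : Prop :=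
  ∀ A ∈ C, ∀ B ∈ C, ¬Compatible A B → A ∪ B ∈ C

/-- A patchwork: incompatible members have both intersection and union in the system. -/
def IsPW {α : Type*} [DecidableEq α] (C : Set (Finset α)) : Prop :=
  ∀ A ∈ C, ∀ B ∈ C, ¬Compatible A B → A ∩ B ∈ C ∧ A ∪ B ∈ C

/-- A saturated patchwork: for incompatible members `A`, `B`, the five sets
`A ∩ B`, `A ∪ B`, `A - B`, `B - A`, `(A ∪ B) - (A ∩ B)` lie in the system. -/
def IsSatPW {α : Type*} [DecidableEq α] (C : Set (Finset α)) : Prop :=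
  ∀ A ∈ C, ∀ B ∈ C, ¬Compatible A B →
    A ∩ B ∈ C ∧ A ∪ B ∈ C ∧ A \ B ∈ C ∧ B \ A ∈ C ∧ (A ∪ B) \ (A ∩ B) ∈ C

/-- The trivial cluster system: all singletons together with `X` itself. -/
def CtrivS (α : Type*) [Fintype α] [DecidableEq α] : Set (Finset α) :=
  {A | (∃ x : α, A = {x}) ∨ A = Finset.univ}

/-- `C` is ample: for every arc `(C₂, C₁)` of the Hasse diagram (i.e. `C₂ ⊊ C₁`
with nothing of `C` strictly between), `C₁ - C₂ ∈ C`. -/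
def IsAmpleS {α : Type*} [DecidableEq α] (C : Set (Finset α)) : Prop :=
  ∀ C₁ ∈ C, ∀ C₂ ∈ C, C₂ ⊂ C₁ → (∀ B ∈ C, ¬(C₂ ⊂ B ∧ B ⊂ C₁)) → C₁ \ C₂ ∈ C

/-- `Max(C:A)`: the maximal elements of `{B ∈ C : B ⊆ A} - {A}`. -/
def MaxBelowS {α : Type*} [DecidableEq α] (C : Set (Finset α)) (A : Finset α) :
    Set (Finset α) :=
  {B ∈ C | B ⊆ A ∧ B ≠ A ∧ ∀ B' ∈ C, B' ⊆ A → B' ≠ A → B ⊆ B' → B = B'}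

/-!
Two distinct maximal clusters below `A` are compatible only if disjoint, and incompatible ones
cover `A`, since their union is a cluster below `A`. An incompatible pair `M₁, M₂` makes every
other maximal `P` incompatible with `M₁` (otherwise `P ⊆ A \ M₁ ⊆ M₂`), hence `A \ M₁ ⊆ P`, so
all pairs overlap; and a cluster `B ⊆ A` incompatible with a maximal `M` yields such a pair by
enlarging `B` to a maximal cluster. For a saturated patchwork, a cluster `B` incompatible with a
maximal `M` is incompatible with `A`; then `A ∩ B` and `A \ B` are clusters below `A` which
[M1-A] forces into `M`, so `A ⊆ M`. In that situation `A ∩ B` and `A \ B` are the only maximal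
clusters, which is why a proper union of maximal clusters is compatible with every cluster.
-/

section

variable {α : Type*} [DecidableEq α] {C : Set (Finset α)} {A N N' : Finset α}

theorem compatible_iff {A B : Finset α} : Compatible A B ↔ Disjoint A B ∨ A ⊆ B ∨ B ⊆ A := by
  rw [Compatible, Finset.disjoint_iff_inter_eq_empty, Finset.inter_eq_left, Finset.inter_eq_right]

theorem Compatible.symm {A B : Finset α} (h : Compatible A B) : Compatible B A := by
  rw [compatible_iff] at *
  rcases h with h | h | h
  exacts [Or.inl h.symm, Or.inr (Or.inr h), Or.inr (Or.inl h)]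

theorem not_compatible_of_subset {B M N : Finset α} (hBN : B ⊆ N) (hBM : ¬Compatible B M)
    (hMN : ¬M ⊆ N) : ¬Compatible N M := by
  simp only [compatible_iff, not_or] at hBM ⊢
  exact ⟨fun h ↦ hBM.1 (h.mono_left hBN), fun h ↦ hBM.2.1 (hBN.trans h), hMN⟩

theorem inter_subset_of_compatible {A B M : Finset α} (hMA : M ⊆ A) (hMB : ¬Compatible M B)
    (h : Compatible (A ∩ B) M) : A ∩ B ⊆ M := by
  simp only [compatible_iff, not_or, Finset.subset_iff, Finset.disjoint_left, Finset.mem_inter] at *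
  grind

theorem sdiff_subset_of_compatible {A B M : Finset α} (hMA : M ⊆ A) (hMB : ¬Compatible M B)
    (h : Compatible (A \ B) M) : A \ B ⊆ M := by
  simp only [compatible_iff, not_or, Finset.subset_iff, Finset.disjoint_left, Finset.mem_sdiff] at *
  grind

theorem exists_mem_maxBelowS_superset {B : Finset α} (hB : B ∈ C) (hBA : B ⊆ A) (hne : B ≠ A) :
    ∃ N ∈ MaxBelowS C A, B ⊆ N := by
  set s : Set (Finset α) := {B' | B' ∈ C ∧ B' ⊆ A ∧ B' ≠ A ∧ B ⊆ B'}
  have hs : s.Finite := A.powerset.finite_toSet.subset fun B' hB' ↦ by simpa using hB'.2.1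
  obtain ⟨N, hBN, ⟨hNC, hNA, hNne, -⟩, hmax⟩ :=
    hs.exists_le_maximal (a := B) ⟨hB, hBA, hne, le_rfl⟩
  refine ⟨N, ⟨hNC, hNA, hNne, fun B' hB' hB'A hB'ne hNB' ↦ ?_⟩, hBN⟩
  exact le_antisymm hNB' (hmax ⟨hB', hB'A, hB'ne, hBN.trans hNB'⟩ hNB')

theorem eq_of_mem_maxBelowS_of_subset (hN : N ∈ MaxBelowS C A) {B : Finset α} (hB : B ∈ C)
    (hBA : B ⊆ A) (hne : B ≠ A) (hNB : N ⊆ B) : N = B :=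
  hN.2.2.2 B hB hBA hne hNB

theorem eq_of_mem_maxBelowS_of_subset_mem (hN : N ∈ MaxBelowS C A) (hN' : N' ∈ MaxBelowS C A)
    (hNN' : N ⊆ N') : N = N' :=
  eq_of_mem_maxBelowS_of_subset hN hN'.1 hN'.2.1 hN'.2.2.1 hNN'

theorem disjoint_of_mem_maxBelowS (hN : N ∈ MaxBelowS C A) (hN' : N' ∈ MaxBelowS C A)
    (hne : N ≠ N') (h : Compatible N N') : Disjoint N N' := by
  rcases compatible_iff.1 h with h | h | h
  · exact h
  · exact absurd (eq_of_mem_maxBelowS_of_subset_mem hN hN' h) hne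
  · exact absurd (eq_of_mem_maxBelowS_of_subset_mem hN' hN h).symm hne

theorem union_eq_of_mem_maxBelowS (hW : IsWeakPW C) (hN : N ∈ MaxBelowS C A)
    (hN' : N' ∈ MaxBelowS C A) (h : ¬Compatible N N') : N ∪ N' = A := by
  by_contra hne
  have hN_eq := eq_of_mem_maxBelowS_of_subset hN (hW N hN.1 N' hN'.1 h)
    (Finset.union_subset hN.2.1 hN'.2.1) hne Finset.subset_union_left
  exact h (compatible_iff.2 (Or.inr (Or.inr (Finset.union_eq_left.1 hN_eq.symm))))

-- The alternatives [M1-A] and [M2-A].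
def IsM1 (C : Set (Finset α)) (A : Finset α) : Prop :=
  ∀ B ∈ C, B ⊆ A → ∀ M ∈ MaxBelowS C A, Compatible B M

def IsM2 (C : Set (Finset α)) (A : Finset α) : Prop :=
  ∀ M ∈ MaxBelowS C A, ∀ M' ∈ MaxBelowS C A, M ≠ M' → M ∩ M' ≠ ∅ ∧ M ∪ M' = A

theorem not_compatible_of_not_compatible_maxBelowS (hW : IsWeakPW C) {M₁ M₂ P : Finset α}
    (hM₁ : M₁ ∈ MaxBelowS C A) (hM₂ : M₂ ∈ MaxBelowS C A) (hinc : ¬Compatible M₁ M₂)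
    (hP : P ∈ MaxBelowS C A) (hne : P ≠ M₁) : ¬Compatible P M₁ := by
  intro hc
  have hPM₂ : P ⊆ M₂ := by
    have hPA := hP.2.1
    rw [← union_eq_of_mem_maxBelowS hW hM₁ hM₂ hinc] at hPA
    exact (disjoint_of_mem_maxBelowS hP hM₁ hne hc).left_le_of_le_sup_left hPA
  obtain rfl := eq_of_mem_maxBelowS_of_subset_mem hP hM₂ hPM₂
  exact hinc hc.symm

theorem pairwise_not_compatible_maxBelowS (hW : IsWeakPW C) {M₁ M₂ : Finset α}
    (hM₁ : M₁ ∈ MaxBelowS C A) (hM₂ : M₂ ∈ MaxBelowS C A) (hinc : ¬Compatible M₁ M₂)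
    (hN : N ∈ MaxBelowS C A) (hN' : N' ∈ MaxBelowS C A) (hne : N ≠ N') :
    ¬Compatible N N' := by
  have hP : ∀ P ∈ MaxBelowS C A, P ≠ M₁ → ¬Compatible P M₁ := fun P hP ↦
    not_compatible_of_not_compatible_maxBelowS hW hM₁ hM₂ hinc hP
  intro hc
  by_cases h : N = M₁
  · subst h
    exact hP N' hN' hne.symm hc.symm
  by_cases h' : N' = M₁
  · subst h'
    exact hP N hN h hc
  have hsub : ∀ P ∈ MaxBelowS C A, P ≠ M₁ → A \ M₁ ⊆ P := fun P hP' hPne ↦ by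
    rw [← union_eq_of_mem_maxBelowS hW hP' hM₁ (hP P hP' hPne)]
    exact (Finset.union_sdiff_right P M₁).trans_subset Finset.sdiff_subset
  obtain ⟨x, hx⟩ : (A \ M₁).Nonempty :=
    Finset.sdiff_nonempty.2 fun hAM ↦ hM₁.2.2.1 (hM₁.2.1.antisymm hAM)
  exact Finset.disjoint_left.1 (disjoint_of_mem_maxBelowS hN hN' hne hc)
    (hsub N hN h hx) (hsub N' hN' h' hx)

theorem isM2_of_not_isM1 (hW : IsWeakPW C) (h : ¬IsM1 C A) : IsM2 C A := by
  simp only [IsM1, not_forall] at h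
  obtain ⟨B, hB, hBA, M, hM, hinc⟩ := h
  have hBA' : B ≠ A := by
    rintro rfl
    exact hinc (compatible_iff.2 (Or.inr (Or.inr hM.2.1)))
  obtain ⟨M₁, hM₁, hBM₁⟩ := exists_mem_maxBelowS_superset hB hBA hBA'
  have hinc₁ : ¬Compatible M₁ M := not_compatible_of_subset hBM₁ hinc fun hMM₁ ↦ by
    obtain rfl := eq_of_mem_maxBelowS_of_subset_mem hM hM₁ hMM₁
    exact hinc (compatible_iff.2 (Or.inr (Or.inl hBM₁)))
  intro N hN N' hN' hne
  have hNN' := pairwise_not_compatible_maxBelowS hW hM₁ hM hinc₁ hN hN' hne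
  exact ⟨fun h ↦ hNN' (Or.inl h), union_eq_of_mem_maxBelowS hW hN hN' hNN'⟩

theorem not_isM2_of_isM1 (h2 : (MaxBelowS C A).Nontrivial) (h : IsM1 C A) : ¬IsM2 C A := by
  obtain ⟨N, hN, N', hN', hne⟩ := h2
  intro hM2
  refine (hM2 N hN N' hN' hne).1 (Finset.disjoint_iff_inter_eq_empty.1 ?_)
  exact disjoint_of_mem_maxBelowS hN hN' hne (h N hN.1 hN.2.1 N' hN')

theorem xor_isM1_isM2 (hW : IsWeakPW C) (h2 : (MaxBelowS C A).Nontrivial) :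
    Xor (IsM1 C A) (IsM2 C A) := by
  by_cases h : IsM1 C A
  · exact Or.inl ⟨h, not_isM2_of_isM1 h2 h⟩
  · exact Or.inr ⟨isM2_of_not_isM1 hW h, h⟩

theorem maxBelowS_subset_adjS (hC : IsCS C) (hSat : IsSatPW C) (hA : A ∈ C) (h : IsM1 C A) :
    MaxBelowS C A ⊆ adjS C := by
  intro M hM
  refine ⟨hC M hM.1, fun B hB ↦ ?_⟩
  by_cases hBA : B ⊆ A
  · exact (h B hB hBA M hM).symm
  by_contra hMB
  obtain ⟨hI, -, hD, -⟩ := hSat A hA B hB (not_compatible_of_subset hM.2.1 hMB hBA)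
  have hAM : A ⊆ M := by
    rw [← Finset.sdiff_union_inter A B]
    exact Finset.union_subset
      (sdiff_subset_of_compatible hM.2.1 hMB (h _ hD Finset.sdiff_subset M hM))
      (inter_subset_of_compatible hM.2.1 hMB (h _ hI Finset.inter_subset_left M hM))
  exact hM.2.2.1 (hM.2.1.antisymm hAM)

theorem isM1_iff_maxBelowS_subset_adjS (hC : IsCS C) (hSat : IsSatPW C) (hA : A ∈ C) :
    IsM1 C A ↔ MaxBelowS C A ⊆ adjS C :=
  ⟨maxBelowS_subset_adjS hC hSat hA, fun h B hB _ _ hM ↦ ((h hM).2 B hB).symm⟩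

theorem eq_inter_or_eq_sdiff_of_mem_maxBelowS (hSat : IsSatPW C) (hA : A ∈ C) {B P : Finset α}
    (hB : B ∈ C) (hAB : ¬Compatible A B) (hP : P ∈ MaxBelowS C A) (hPB : Compatible P B) :
    P = A ∩ B ∨ P = A \ B := by
  obtain ⟨hI, -, hD, -⟩ := hSat A hA B hB hAB
  simp only [compatible_iff, not_or] at hAB
  rcases compatible_iff.1 hPB with h | h | h
  · refine Or.inr (eq_of_mem_maxBelowS_of_subset hP hD Finset.sdiff_subset
      (fun e ↦ hAB.1 (Finset.sdiff_eq_self_iff_disjoint.1 e)) (Finset.subset_sdiff.2 ⟨hP.2.1, h⟩))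
  · refine Or.inl (eq_of_mem_maxBelowS_of_subset hP hI Finset.inter_subset_left
      (fun e ↦ hAB.2.1 (Finset.inter_eq_left.1 e)) (Finset.subset_inter hP.2.1 h))
  · exact absurd (h.trans hP.2.1) hAB.2.2

theorem not_compatible_of_mem_maxBelowS {B : Finset α} (hB : B ∈ C) (hN : N ∈ MaxBelowS C A)
    (hN' : N' ∈ MaxBelowS C A) (hNB : N ⊆ B) (hNB' : ¬Disjoint N B) (hBN : ¬B ⊆ N)
    (hN'B : ¬N' ⊆ B) : ¬Compatible A B := by
  rw [compatible_iff]
  rintro (h | h | h)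
  · exact hNB' (h.mono_left hN.2.1)
  · exact hN'B (hN'.2.1.trans h)
  · have hne : B ≠ A := by
      rintro rfl
      exact hN'B hN'.2.1
    obtain ⟨P, hP, hBP⟩ := exists_mem_maxBelowS_superset hB h hne
    obtain rfl := eq_of_mem_maxBelowS_of_subset_mem hN hP (hNB.trans hBP)
    exact hBN hBP

theorem sup_mem_adjS (hC : IsCS C) (hSat : IsSatPW C) (hA : A ∈ C)
    (hadj : MaxBelowS C A ⊆ adjS C) {M : Finset (Finset α)} (hM : ↑M ⊆ MaxBelowS C A)
    (hne : M.Nonempty) (hproper : ↑M ≠ MaxBelowS C A) : M.sup id ∈ adjS C := by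
  obtain ⟨N₀, hN₀⟩ := hne
  refine ⟨(hC N₀ (hM hN₀).1).mono (Finset.le_sup (f := id) hN₀), fun B hB ↦ compatible_iff.2 ?_⟩
  have hcompat : ∀ P ∈ MaxBelowS C A, Compatible P B := fun P hP ↦ (hadj hP).2 B hB
  by_cases hsup : ∃ N ∈ M, B ⊆ N
  · obtain ⟨N, hN, hBN⟩ := hsup
    exact Or.inr (Or.inr (hBN.trans (Finset.le_sup (f := id) hN)))
  push Not at hsup
  by_cases hdisj : ∀ N ∈ M, Disjoint N B
  · exact Or.inl (Finset.disjoint_sup_left.2 hdisj)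
  by_cases hsub : ∀ N ∈ M, N ⊆ B
  · exact Or.inr (Or.inl (Finset.sup_le hsub))
  push Not at hdisj hsub
  obtain ⟨N, hN, hNB⟩ := hdisj
  obtain ⟨N', hN', hN'B⟩ := hsub
  have hNB' : N ⊆ B :=
    ((compatible_iff.1 (hcompat N (hM hN))).resolve_left hNB).resolve_right (hsup N hN)
  have hAB := not_compatible_of_mem_maxBelowS hB (hM hN) (hM hN') hNB' hNB (hsup N hN) hN'B
  have hcases : ∀ P ∈ MaxBelowS C A, P = A ∩ B ∨ P = A \ B := fun P hP ↦
    eq_inter_or_eq_sdiff_of_mem_maxBelowS hSat hA hB hAB hP (hcompat P hP)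
  have hN_eq : N = A ∩ B := (hcases N (hM hN)).resolve_right <| by
    rintro rfl
    exact hNB Finset.sdiff_disjoint
  have hN'_eq : N' = A \ B := (hcases N' (hM hN')).resolve_left <| by
    rintro rfl
    exact hN'B Finset.inter_subset_right
  refine absurd (hM.antisymm fun P hP ↦ ?_) hproper
  rcases hcases P hP with rfl | rfl
  exacts [hN_eq ▸ hN, hN'_eq ▸ hN']

end

theorem stmt12_general {α : Type*} [DecidableEq α]
    (C : Set (Finset α)) (hC : IsCS C) (hW : IsWeakPW C)
    (A : Finset α) (hA : A ∈ C) (h2 : (MaxBelowS C A).Nontrivial) :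
    Xor' (∀ B ∈ C, B ⊆ A → ∀ M ∈ MaxBelowS C A, Compatible B M)
         (∀ M ∈ MaxBelowS C A, ∀ M' ∈ MaxBelowS C A, M ≠ M' →
            M ∩ M' ≠ ∅ ∧ M ∪ M' = A) ∧
    (IsSatPW C →
      ((∀ B ∈ C, B ⊆ A → ∀ M ∈ MaxBelowS C A, Compatible B M) ↔
          MaxBelowS C A ⊆ adjS C) ∧
      ((∀ B ∈ C, B ⊆ A → ∀ M ∈ MaxBelowS C A, Compatible B M) →
        ∀ M : Finset (Finset α), (↑M : Set (Finset α)) ⊆ MaxBelowS C A →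
          M.Nonempty → (↑M : Set (Finset α)) ≠ MaxBelowS C A →
          M.sup id ∈ adjS C)) :=
  ⟨xor_isM1_isM2 hW h2, fun hSat ↦ ⟨isM1_iff_maxBelowS_subset_adjS hC hSat hA,
    fun hM1 _ hM hne hproper ↦
      sup_mem_adjS hC hSat hA (maxBelowS_subset_adjS hC hSat hA hM1) hM hne hproper⟩⟩

/-- For a weak patchwork `C` and `A ∈ C` with `|Max(C:A)| ≥ 2`, exactly one of
[M1-A] and [M2-A] holds; and if `C` is saturated, [M1-A] holds iff
`Max(C:A) ⊆ C*`, in which case `⟨Max(C:A)⟩ ⊆ C*` as well. -/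
theorem stmt12 {α : Type*} [Fintype α] [DecidableEq α] (hcard : 2 ≤ Fintype.card α)
    (C : Set (Finset α)) (hC : IsCS C) (hW : IsWeakPW C)
    (A : Finset α) (hA : A ∈ C) (h2 : (MaxBelowS C A).Nontrivial) :
    Xor' (∀ B ∈ C, B ⊆ A → ∀ M ∈ MaxBelowS C A, Compatible B M)
         (∀ M ∈ MaxBelowS C A, ∀ M' ∈ MaxBelowS C A, M ≠ M' →
            M ∩ M' ≠ ∅ ∧ M ∪ M' = A) ∧
    (IsSatPW C →
      ((∀ B ∈ C, B ⊆ A → ∀ M ∈ MaxBelowS C A, Compatible B M) ↔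
          MaxBelowS C A ⊆ adjS C) ∧
      ((∀ B ∈ C, B ⊆ A → ∀ M ∈ MaxBelowS C A, Compatible B M) →
        ∀ M : Finset (Finset α), (↑M : Set (Finset α)) ⊆ MaxBelowS C A →
          M.Nonempty → (↑M : Set (Finset α)) ≠ MaxBelowS C A →
          M.sup id ∈ adjS C)) :=
  stmt12_general C hC hW A hA h2
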